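/- Let β ∈ ℝ and define, for s > 0, W̃3(s) = 16β³(β² − 1)·(2s(s² − 1) + (s² + 1)²·arccos(2/(s² + 1) − 1)) / (s² + 1)². Then for every s > 0, W̃3 is differentiable at s and W̃3'(s) = 256·β³(β² − 1)·s² / (s² + 1)³. In particular, if β > 1 then W̃3 is strictly increasing on (0, ∞), and if 0 < β < 1 then W̃3 is strictly decreasing on (0, ∞). -/

import Mathlib

/-!
Substituting `s = tan θ` gives `2 / (s² + 1) - 1 = cos 2θ`, so on `[0, ∞)` the arccos term is just
`2 arctan s`. Then `W̃3 / (16 β³ (β² - 1))` is a rational function plus `2 arctan s`, whose derivative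
`16 s² / (s² + 1)³` is positive for `s > 0`; the sign of `β³ (β² - 1)` decides monotonicity.
-/

open Real Set

theorem arccos_two_div_sq_add_one_sub_one {s : ℝ} (hs : 0 ≤ s) :
    arccos (2 / (s ^ 2 + 1) - 1) = 2 * arctan s := by
  have h_nonneg : 0 ≤ arctan s := arctan_nonneg.mpr hs
  refine arccos_eq_of_eq_cos (by positivity) (by linarith [arctan_lt_pi_div_two s]) ?_
  rw [cos_two_mul, cos_sq_arctan]
  ring

theorem hasDerivAt_div_add_two_mul_arctan (s : ℝ) :
    HasDerivAt (fun x => 2 * x * (x ^ 2 - 1) / (x ^ 2 + 1) ^ 2 + 2 * arctan x)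
      (16 * s ^ 2 / (s ^ 2 + 1) ^ 3) s := by
  have h_ne : (s ^ 2 + 1) ^ 2 ≠ 0 := by positivity
  have h_num : HasDerivAt (fun x => 2 * x * (x ^ 2 - 1)) (6 * s ^ 2 - 2) s := by
    refine (((hasDerivAt_id s).const_mul 2).mul ((hasDerivAt_pow 2 s).sub_const 1)).congr_deriv ?_
    simp only [id]
    ring
  have h_den : HasDerivAt (fun x => (x ^ 2 + 1) ^ 2) (4 * s * (s ^ 2 + 1)) s := by
    refine (((hasDerivAt_pow 2 s).add_const 1).pow 2).congr_deriv ?_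
    ring
  refine ((h_num.div h_den h_ne).add ((hasDerivAt_arctan s).const_mul 2)).congr_deriv ?_
  field_simp
  ring

/-- `W̃3 / (16 β³ (β² - 1))`. -/
noncomputable def wronskianTildeProfile (s : ℝ) : ℝ :=
  (2 * s * (s ^ 2 - 1) + (s ^ 2 + 1) ^ 2 * arccos (2 / (s ^ 2 + 1) - 1)) / (s ^ 2 + 1) ^ 2

theorem wronskianTildeProfile_eq {s : ℝ} (hs : 0 ≤ s) :
    wronskianTildeProfile s = 2 * s * (s ^ 2 - 1) / (s ^ 2 + 1) ^ 2 + 2 * arctan s := by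
  rw [wronskianTildeProfile, arccos_two_div_sq_add_one_sub_one hs, add_div,
    mul_div_cancel_left₀ _ (by positivity)]

theorem hasDerivAt_wronskianTildeProfile {s : ℝ} (hs : 0 < s) :
    HasDerivAt wronskianTildeProfile (16 * s ^ 2 / (s ^ 2 + 1) ^ 3) s :=
  (hasDerivAt_div_add_two_mul_arctan s).congr_of_eventuallyEq <|
    Filter.mem_of_superset (Ioi_mem_nhds hs) fun _ hx => wronskianTildeProfile_eq (mem_Ioi.mp hx).le

theorem strictMonoOn_wronskianTildeProfile : StrictMonoOn wronskianTildeProfile (Ioi 0) := by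
  refine strictMonoOn_of_hasDerivWithinAt_pos (convex_Ioi 0)
    (fun x hx => (hasDerivAt_wronskianTildeProfile hx).continuousAt.continuousWithinAt)
    (f' := fun s => 16 * s ^ 2 / (s ^ 2 + 1) ^ 3) ?_ ?_ <;> rw [interior_Ioi]
  · exact fun x hx => (hasDerivAt_wronskianTildeProfile hx).hasDerivWithinAt
  · intro x hx
    have : 0 < x := hx
    positivity

theorem wronskian_tilde_three_monotone
    (β : ℝ)
    (W3t : ℝ → ℝ)
    (hW3t : W3t = fun s =>
      16 * β ^ 3 * (β ^ 2 - 1) *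
          (2 * s * (s ^ 2 - 1) +
            (s ^ 2 + 1) ^ 2 * Real.arccos (2 / (s ^ 2 + 1) - 1)) /
        (s ^ 2 + 1) ^ 2) :
    (∀ s : ℝ, 0 < s →
      HasDerivAt W3t (256 * β ^ 3 * (β ^ 2 - 1) * s ^ 2 / (s ^ 2 + 1) ^ 3) s) ∧
    (1 < β → StrictMonoOn W3t (Ioi 0)) ∧
    (0 < β → β < 1 → StrictAntiOn W3t (Ioi 0)) := by
  set c := 16 * β ^ 3 * (β ^ 2 - 1)
  have hW : W3t = fun s => c * wronskianTildeProfile s := by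
    simp only [hW3t, wronskianTildeProfile, mul_div_assoc]
  subst hW
  have hmono := strictMonoOn_wronskianTildeProfile
  refine ⟨fun s hs => ?_, fun hβ => ?_, fun hβ₀ hβ₁ => ?_⟩
  · refine ((hasDerivAt_wronskianTildeProfile hs).const_mul c).congr_deriv ?_
    ring
  · have hc : 0 < c := by
      have : 0 < β ^ 2 - 1 := by nlinarith
      positivity
    exact fun x hx y hy hxy => mul_lt_mul_of_pos_left (hmono hx hy hxy) hc
  · have hc : c < 0 := mul_neg_of_pos_of_neg (by positivity) (by nlinarith)
    exact fun x hx y hy hxy => mul_lt_mul_of_neg_left (hmono hx hy hxy) hc
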